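/- Let H be a ≤-hypergroupoid. If A is a left (resp. right) ideal of H, then the characteristic function f_A is a fuzzy left (resp. fuzzy right) ideal of H. -/

import Mathlib

/-- The induced operation `A*B = ⋃_{(a,b) ∈ A×B} a∘b` on subsets of a hypergroupoid. -/
def hProd {H : Type*} (circ : H → H → Set H) (A B : Set H) : Set H :=
  {x | ∃ a ∈ A, ∃ b ∈ B, x ∈ circ a b}

/-- A (nonempty) subset `A` is a left ideal of the ≤-hypergroupoid:
`H*A ⊆ A` and `A` is downward closed under `le`. -/
def IsLeftIdeal {H : Type*} (circ : H → H → Set H) (le : H → H → Prop) (A : Set H) : Prop :=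
  A.Nonempty ∧ hProd circ Set.univ A ⊆ A ∧ ∀ a ∈ A, ∀ b : H, le b a → b ∈ A

def IsRightIdeal {H : Type*} (circ : H → H → Set H) (le : H → H → Prop) (A : Set H) : Prop :=
  A.Nonempty ∧ hProd circ A Set.univ ⊆ A ∧ ∀ a ∈ A, ∀ b : H, le b a → b ∈ A

def IsIdeal {H : Type*} (circ : H → H → Set H) (le : H → H → Prop) (A : Set H) : Prop :=
  IsLeftIdeal circ le A ∧ IsRightIdeal circ le A

def IsSubgroupoid {H : Type*} (circ : H → H → Set H) (A : Set H) : Prop :=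
  A.Nonempty ∧ hProd circ A A ⊆ A

def IsPrimeSubset {H : Type*} (circ : H → H → Set H) (I : Set H) : Prop :=
  I.Nonempty ∧ (∀ a b : H, circ a b ⊆ I → a ∈ I ∨ b ∈ I) ∧
    (∀ a b : H, circ a b ⊆ I ∨ circ a b ∩ I = ∅)

def IsPrimeIdeal {H : Type*} (circ : H → H → Set H) (le : H → H → Prop) (A : Set H) : Prop :=
  IsIdeal circ le A ∧ IsPrimeSubset circ A

def IsSemiprimeSubset {H : Type*} (circ : H → H → Set H) (I : Set H) : Prop :=
  I.Nonempty ∧ (∀ a : H, circ a a ⊆ I → a ∈ I) ∧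
    (∀ a : H, circ a a ⊆ I ∨ circ a a ∩ I = ∅)

def IsSemiprimeIdeal {H : Type*} (circ : H → H → Set H) (le : H → H → Prop) (A : Set H) : Prop :=
  IsIdeal circ le A ∧ IsSemiprimeSubset circ A

/-- A fuzzy subset of `H` is a map into `[0,1]`. -/
def IsFuzzySubset {H : Type*} (f : H → ℝ) : Prop := ∀ x, f x ∈ Set.Icc (0 : ℝ) 1

open Classical in
/-- The characteristic function of a subset. -/
noncomputable def charFun {H : Type*} (A : Set H) : H → ℝ := fun x => if x ∈ A then 1 else 0

def FuzzyLeftIdeal {H : Type*} (circ : H → H → Set H) (le : H → H → Prop) (f : H → ℝ) : Prop :=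
  (∀ x y : H, le x y → f y ≤ f x) ∧ ∀ x y : H, ∀ u ∈ circ x y, f y ≤ f u

def FuzzyRightIdeal {H : Type*} (circ : H → H → Set H) (le : H → H → Prop) (f : H → ℝ) : Prop :=
  (∀ x y : H, le x y → f y ≤ f x) ∧ ∀ x y : H, ∀ u ∈ circ x y, f x ≤ f u

def FuzzyIdeal {H : Type*} (circ : H → H → Set H) (le : H → H → Prop) (f : H → ℝ) : Prop :=
  FuzzyLeftIdeal circ le f ∧ FuzzyRightIdeal circ le f

def FuzzyPrimeSubset {H : Type*} (circ : H → H → Set H) (f : H → ℝ) : Prop :=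
  ∀ x y : H, ∀ u ∈ circ x y, f u ≤ max (f x) (f y)

def FuzzyPrimeIdeal {H : Type*} (circ : H → H → Set H) (le : H → H → Prop) (f : H → ℝ) : Prop :=
  FuzzyIdeal circ le f ∧ FuzzyPrimeSubset circ f

def FuzzySemiprimeSubset {H : Type*} (circ : H → H → Set H) (f : H → ℝ) : Prop :=
  ∀ x : H, ∀ u ∈ circ x x, f u ≤ f x

def FuzzySemiprimeIdeal {H : Type*} (circ : H → H → Set H) (le : H → H → Prop) (f : H → ℝ) : Prop :=
  FuzzyIdeal circ le f ∧ FuzzySemiprimeSubset circ f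

section CharFun

variable {H : Type*} (circ : H → H → Set H) (le : H → H → Prop) (A : Set H)

theorem charFun_le_charFun_iff {x y : H} : charFun A x ≤ charFun A y ↔ (x ∈ A → y ∈ A) := by
  unfold charFun
  split_ifs <;> simp_all

theorem charFun_antitone_iff :
    (∀ x y : H, le x y → charFun A y ≤ charFun A x) ↔ ∀ a ∈ A, ∀ b : H, le b a → b ∈ A := by
  simp only [charFun_le_charFun_iff]
  exact ⟨fun h a ha b hba => h b a hba ha, fun h x y hxy hy => h y hy x hxy⟩

theorem fuzzyLeftIdeal_charFun_iff :
    FuzzyLeftIdeal circ le (charFun A) ↔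
      hProd circ Set.univ A ⊆ A ∧ ∀ a ∈ A, ∀ b : H, le b a → b ∈ A := by
  rw [FuzzyLeftIdeal, charFun_antitone_iff, and_comm]
  simp only [charFun_le_charFun_iff]
  refine and_congr_left' ⟨fun h u ⟨x, _, y, hy, hu⟩ => h x y u hu hy, fun h x y u hu hy => ?_⟩
  exact h ⟨x, trivial, y, hy, hu⟩

theorem fuzzyRightIdeal_charFun_iff :
    FuzzyRightIdeal circ le (charFun A) ↔
      hProd circ A Set.univ ⊆ A ∧ ∀ a ∈ A, ∀ b : H, le b a → b ∈ A := by
  rw [FuzzyRightIdeal, charFun_antitone_iff, and_comm]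
  simp only [charFun_le_charFun_iff]
  refine and_congr_left' ⟨fun h u ⟨x, hx, y, _, hu⟩ => h x y u hu hx, fun h x y u hu hx => ?_⟩
  exact h ⟨x, hx, y, trivial, hu⟩

end CharFun

theorem stmt_7_general {H : Type*} (circ : H → H → Set H)
    (le : H → H → Prop) (A : Set H) :
    (IsLeftIdeal circ le A → FuzzyLeftIdeal circ le (charFun A)) ∧
    (IsRightIdeal circ le A → FuzzyRightIdeal circ le (charFun A)) :=
  ⟨fun hA => (fuzzyLeftIdeal_charFun_iff circ le A).2 hA.2,
    fun hA => (fuzzyRightIdeal_charFun_iff circ le A).2 hA.2⟩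

theorem stmt_7 {H : Type*} [Nonempty H] (circ : H → H → Set H)
    (hne : ∀ a b : H, (circ a b).Nonempty) (le : H → H → Prop) (A : Set H) :
    (IsLeftIdeal circ le A → FuzzyLeftIdeal circ le (charFun A)) ∧
    (IsRightIdeal circ le A → FuzzyRightIdeal circ le (charFun A)) :=
  stmt_7_general circ le A
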